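/- arXiv:1605.04160 — 4 statements merged into one kernel-verified Lean document; each statement's English description precedes it below -/
import Mathlib

section
/- Let h ≥ 1 and 1 ≤ k ≤ h. Then the quantity (2h³ - 2h + 3k² + 3k) / (3h² - 3h + 6k), which is the average number of comparisons to search for a present key in a lattice of height h with k proper keys on diagonal h+2 using SearchLDS, is at most h. -/
/-! Clearing the denominator `3h(h - 1) + 6k ≥ 0`, the claim becomes the identity
`h (3h² - 3h + 6k) - (2h³ - 2h + 3k² + 3k) = h(h - 1)(h - 2) + 3k(2h - k - 1)`,
whose two summands are nonnegative for natural numbers `k ≤ h`. -/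

section

variable {R : Type*} [CommRing R] [LinearOrder R] [IsStrictOrderedRing R]

lemma natCast_mul_sub_one_nonneg (n : ℕ) : 0 ≤ (n : R) * (n - 1) := by
  rcases n with _ | n
  · simp
  · push_cast; ring_nf; positivity

lemma natCast_mul_sub_one_mul_sub_two_nonneg (n : ℕ) : 0 ≤ (n : R) * (n - 1) * (n - 2) := by
  rcases n with _ | _ | n
  · simp
  · simp
  · push_cast; ring_nf; positivity

lemma natCast_mul_two_mul_sub_sub_one_nonneg {k h : ℕ} (hkh : k ≤ h) :
    0 ≤ (k : R) * (2 * h - k - 1) := by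
  rcases k with _ | k
  · simp
  · have hk : (k : R) + 1 ≤ h := by exact_mod_cast hkh
    have : 0 ≤ 2 * (h : R) - (k + 1) - 1 := by linarith [(k.cast_nonneg : (0 : R) ≤ k)]
    push_cast
    positivity

end

theorem searchLDS_average_comparisons_le_general (h k : ℕ) (hkh : k ≤ h) :
    (2 * (h : ℝ) ^ 3 - 2 * h + 3 * (k : ℝ) ^ 2 + 3 * k) /
      (3 * (h : ℝ) ^ 2 - 3 * h + 6 * k) ≤ h := by
  have hh : 0 ≤ (h : ℝ) * (h - 1) := natCast_mul_sub_one_nonneg h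
  have hhh : 0 ≤ (h : ℝ) * (h - 1) * (h - 2) := natCast_mul_sub_one_mul_sub_two_nonneg h
  have hk : 0 ≤ (k : ℝ) * (2 * h - k - 1) := natCast_mul_two_mul_sub_sub_one_nonneg hkh
  have hden : 0 ≤ 3 * (h : ℝ) ^ 2 - 3 * h + 6 * k := by
    linear_combination 3 * hh + 6 * (k.cast_nonneg : (0 : ℝ) ≤ k)
  refine div_le_of_le_mul₀ hden h.cast_nonneg ?_
  linear_combination hhh + 3 * hk

/-- For `h ≥ 1` and `1 ≤ k ≤ h`, the average number of comparisons
`(2h³ - 2h + 3k² + 3k)/(3h² - 3h + 6k)` of SearchLDS for a present key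
is at most `h`. -/
theorem searchLDS_average_comparisons_le (h k : ℕ) (hh : 1 ≤ h) (hk1 : 1 ≤ k) (hkh : k ≤ h) :
    (2 * (h : ℝ) ^ 3 - 2 * h + 3 * (k : ℝ) ^ 2 + 3 * k) /
      (3 * (h : ℝ) ^ 2 - 3 * h + 6 * k) ≤ h :=
  searchLDS_average_comparisons_le_general h k hkh
end

section
/- Let h ≥ 1 and 1 ≤ k ≤ h. Then (2h³ - 2h + 3k² + 3k)/(3h² - 3h + 6k) ≥ (h-1)/3, i.e., the average number of comparisons of SearchLDS for present keys is at least (h-1)/3 (so it is Θ(h)). -/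
/-!
Clearing the (positive) denominator, the claim becomes
`0 ≤ 3 (2h³ - 2h + 3k² + 3k) - (h - 1)(3h² - 3h + 6k) = (3k - h)² + 3h³ + 5h² - 9h + 15k`,
and the cubic `3h³ + 5h² - 9h + 15` is positive for `h ≥ 0`.
-/

lemma three_mul_sq_sub_add_six_mul_pos {h k : ℝ} (hk : 1 ≤ k) : 0 < 3 * h ^ 2 - 3 * h + 6 * k := by
  nlinarith [sq_nonneg (h - 1 / 2)]

lemma sub_one_div_three_le_average_comparisons {h k : ℝ} (hh : 0 ≤ h) (hk : 1 ≤ k) :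
    (h - 1) / 3 ≤ (2 * h ^ 3 - 2 * h + 3 * k ^ 2 + 3 * k) / (3 * h ^ 2 - 3 * h + 6 * k) := by
  rw [div_le_div_iff₀ three_pos (three_mul_sq_sub_add_six_mul_pos hk)]
  nlinarith [sq_nonneg (3 * k - h), sq_nonneg (h - 1), mul_nonneg hh (sq_nonneg (h - 1))]

theorem searchLDS_average_comparisons_ge_general (h k : ℕ) (hk1 : 1 ≤ k) :
    ((h : ℝ) - 1) / 3 ≤
      (2 * (h : ℝ) ^ 3 - 2 * h + 3 * (k : ℝ) ^ 2 + 3 * k) /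
        (3 * (h : ℝ) ^ 2 - 3 * h + 6 * k) :=
  sub_one_div_three_le_average_comparisons h.cast_nonneg (by exact_mod_cast hk1)

/-- For `h ≥ 1` and `1 ≤ k ≤ h`, the average number of comparisons
`(2h³ - 2h + 3k² + 3k)/(3h² - 3h + 6k)` of SearchLDS for a present key
is at least `(h-1)/3`. -/
theorem searchLDS_average_comparisons_ge (h k : ℕ) (hh : 1 ≤ h) (hk1 : 1 ≤ k) (hkh : k ≤ h) :
    ((h : ℝ) - 1) / 3 ≤
      (2 * (h : ℝ) ^ 3 - 2 * h + 3 * (k : ℝ) ^ 2 + 3 * k) /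
        (3 * (h : ℝ) ^ 2 - 3 * h + 6 * k) :=
  searchLDS_average_comparisons_ge_general h k hk1
end

section
/- Let L be an α-sorted lattice (3 ≤ α ≤ h). If K is a present key whose search path ends on a diagonal s < α + 2, then the search path of K has the form D^a d^b for some a, b ≥ 0, and hence J(K) ≤ 2. -/
open scoped Classical

/-- The number of maximal runs (blocks of consecutive equal letters) of a word. -/
def numRuns (w : List Bool) : ℕ := (w.destutter (· ≠ ·)).length

/-- A lattice data structure of height `h`.  The cell on row `r` and column `c`
(with `1 ≤ r`, `1 ≤ c`, `r + c ≤ h + 4`) holds the value `val r c : ℕ∞`, where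
`0` and `⊤` are the improper keys and all other values are proper keys.  The
cell on diagonal `s` and (diagonal-)position `j` is the cell `(s + 1 - j, j)`. -/
structure LDS (h : ℕ) where
  val : ℕ → ℕ → ℕ∞
  /-- every cell of row one contains `0` -/
  row_one : ∀ c, val 1 c = 0
  /-- every cell of column one contains `0` -/
  col_one : ∀ r, val r 1 = 0
  /-- every cell of diagonal `h + 3` except its head and tail contains `∞` -/
  top_diag : ∀ r c, 2 ≤ r → 2 ≤ c → r + c = h + 4 → val r c = ⊤
  /-- non-boundary cells contain positive keys (proper keys or `∞`) -/
  pos : ∀ r c, 2 ≤ r → 2 ≤ c → r + c ≤ h + 3 → 0 < val r c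
  /-- cells on diagonals up to `h + 1` contain proper keys (not `∞`) -/
  proper_inner : ∀ r c, 2 ≤ r → 2 ≤ c → r + c ≤ h + 2 → val r c ≠ ⊤
  /-- keys increase from left to right along rows -/
  row_mono : ∀ r c, 2 ≤ r → 2 ≤ c → r + (c + 1) ≤ h + 3 → val r c < val r (c + 1)
  /-- keys increase from bottom to top along columns -/
  col_mono : ∀ r c, 2 ≤ r → 2 ≤ c → (r + 1) + c ≤ h + 3 → val r c < val (r + 1) c
  /-- proper keys increase from head to tail along diagonals -/
  diag_mono : ∀ r c, 3 ≤ r → 2 ≤ c → r + c ≤ h + 3 → val (r - 1) (c + 1) ≠ ⊤ →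
      val r c < val (r - 1) (c + 1)

/-- A lattice of height `h` is sorted of degree `α` (`α`-sorted) if for each
`4 ≤ s ≤ α + 2` the first proper key of diagonal `s` (the cell `(s - 1, 2)`)
is greater than the last proper key of diagonal `s - 1` (the cell `(2, s - 2)`). -/
def AlphaSorted (h α : ℕ) (L : LDS h) : Prop :=
  ∀ s, 4 ≤ s → s ≤ α + 2 → L.val 2 (s - 2) < L.val (s - 1) 2

/-- The search path of `SearchLDS` starting at row `r`, column `c`:  the current
cell `C = val r c` is compared with the key `K`; the search stops if `C = K`
or `C = 0`, moves down-right (`d`, recorded as `true`) if `K > C`, and moves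
down (`D`, recorded as `false`) if `K < C`. -/
def searchPath (val : ℕ → ℕ → ℕ∞) (K : ℕ∞) : ℕ → ℕ → List Bool
  | 0, _ => []
  | r + 1, c =>
    if val (r + 1) c = K ∨ val (r + 1) c = 0 then []
    else if val (r + 1) c < K then true :: searchPath val K r (c + 1)
    else false :: searchPath val K r c

/-- The search path of a key `K` with respect to a lattice of height `h`:
`SearchLDS` starts at the second cell of diagonal `h + 2`, i.e. row `h + 1`,
column `2`. -/
def path (h : ℕ) (L : LDS h) (K : ℕ∞) : List Bool :=
  searchPath L.val K (h + 1) 2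

/-- `K` is a present key of `L`: it occupies some non-boundary cell. -/
def Present (h : ℕ) (L : LDS h) (K : ℕ∞) : Prop :=
  ∃ r c, 2 ≤ r ∧ 2 ≤ c ∧ r + c ≤ h + 3 ∧ L.val r c = K

/-- `K` is in the search space of `L`: a positive finite value. -/
def InSearchSpace (K : ℕ∞) : Prop := 0 < K ∧ K ≠ ⊤

/-!
While the search runs, `K` stays in a column at least the current one and on a diagonal at most
the current one. After the first `d` move, the cell preceding the current one on its diagonal holds
a key smaller than `K`, and `D` moves keep it so. At the last `D` move after a `d` move, `K` thus
lies on a diagonal at most the final one `s ≤ α + 1`, while a smaller proper key lies on diagonal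
`s + 1`. But α-sortedness chains the diagonals up to `α + 2`: every key of a diagonal is below every
proper key of a later one.
-/

theorem numRuns_cons_cons (x y : Bool) (l : List Bool) :
    numRuns (x :: y :: l) = numRuns (y :: l) + if x = y then 0 else 1 := by
  by_cases hxy : x = y
  · subst hxy; simp [numRuns, List.destutter_cons']
  · simp [numRuns, List.destutter_cons', hxy]

theorem numRuns_replicate_succ_append (n : ℕ) (x : Bool) (l : List Bool) :
    numRuns (List.replicate (n + 1) x ++ l) = numRuns (x :: l) := by
  induction n with
  | zero => rfl
  | succ n ih =>
    rw [← ih, List.replicate_succ, List.cons_append, List.replicate_succ, List.cons_append,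
      numRuns_cons_cons, if_pos rfl, Nat.add_zero]

theorem numRuns_replicate_append_replicate_le (a b : ℕ) (x y : Bool) :
    numRuns (List.replicate a x ++ List.replicate b y) ≤ 2 := by
  have hrep (n : ℕ) (z : Bool) : numRuns (List.replicate (n + 1) z) = 1 := by
    simpa [numRuns] using numRuns_replicate_succ_append n z []
  rcases a with _ | a <;> rcases b with _ | b
  · simp [numRuns]
  · simp [hrep]
  · simp [hrep]
  · rw [numRuns_replicate_succ_append, List.replicate_succ, numRuns_cons_cons,
      ← List.replicate_succ, hrep]
    split_ifs <;> simp

theorem searchPath_succ_cases (val : ℕ → ℕ → ℕ∞) (K : ℕ∞) (r c : ℕ) :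
    searchPath val K (r + 1) c = [] ∨
      val (r + 1) c < K ∧ searchPath val K (r + 1) c = true :: searchPath val K r (c + 1) ∨
      K < val (r + 1) c ∧ searchPath val K (r + 1) c = false :: searchPath val K r c := by
  rw [searchPath]
  split_ifs with hstop hlt
  · exact .inl rfl
  · exact .inr (.inl ⟨hlt, rfl⟩)
  · exact .inr (.inr ⟨lt_of_le_of_ne (not_lt.mp hlt) fun e => hstop (.inl e.symm), rfl⟩)

namespace LDS

variable {h : ℕ} (L : LDS h)

theorem col_le {r r' c : ℕ} (hr : 2 ≤ r) (hc : 2 ≤ c) (hrr' : r ≤ r') (hr'c : r' + c ≤ h + 3) :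
    L.val r c ≤ L.val r' c := by
  induction r', hrr' using Nat.le_induction with
  | base => exact le_rfl
  | succ r' hrr' ih =>
    exact (ih (by omega)).trans (L.col_mono r' c (by omega) hc hr'c).le

theorem row_le {r c c' : ℕ} (hr : 2 ≤ r) (hc : 2 ≤ c) (hcc' : c ≤ c') (hrc' : r + c' ≤ h + 3) :
    L.val r c ≤ L.val r c' := by
  induction c', hcc' using Nat.le_induction with
  | base => exact le_rfl
  | succ c' hcc' ih =>
    exact (ih (by omega)).trans (L.row_mono r c' hr (by omega) hrc').le

theorem diag_le {r c r' c' : ℕ} (hr' : 2 ≤ r') (hc : 2 ≤ c) (hr'r : r' ≤ r)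
    (hdiag : r + c = r' + c') (hrc : r + c ≤ h + 3) (htop : L.val r' c' ≠ ⊤) :
    L.val r c ≤ L.val r' c' := by
  induction r, hr'r using Nat.le_induction generalizing c with
  | base =>
    obtain rfl : c = c' := by omega
    exact le_rfl
  | succ r hr'r ih =>
    have hnext : L.val r (c + 1) ≤ L.val r' c' := ih (by omega) (by omega) (by omega)
    exact (L.diag_mono (r + 1) c (by omega) hc hrc (ne_top_of_le_ne_top htop hnext)).le.trans
      hnext

/-- `K` lies among the cells that a search standing at `(r, c)` can still reach. -/
def KeyReachable (K : ℕ∞) (r c : ℕ) : Prop :=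
  ∃ r₀ c₀, 2 ≤ r₀ ∧ c ≤ c₀ ∧ r₀ + c₀ ≤ r + c ∧ L.val r₀ c₀ = K

variable {L} {K : ℕ∞} {r c : ℕ}

theorem keyReachable_of_present (hK : Present h L K) : L.KeyReachable K (h + 1) 2 := by
  obtain ⟨r₀, c₀, hr₀, hc₀, hsum, hval⟩ := hK
  exact ⟨r₀, c₀, hr₀, hc₀, by omega, hval⟩

theorem KeyReachable.two_le (hK : L.KeyReachable K r c) : 2 ≤ r := by
  obtain ⟨r₀, c₀, hr₀, hc₀, hsum, -⟩ := hK
  omega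

theorem KeyReachable.right (hK : L.KeyReachable K (r + 1) c) (hc : 2 ≤ c)
    (hrc : r + 1 + c ≤ h + 3) (hlt : L.val (r + 1) c < K) : L.KeyReachable K r (c + 1) := by
  obtain ⟨r₀, c₀, hr₀, hc₀, hsum, rfl⟩ := hK
  refine ⟨r₀, c₀, hr₀, ?_, by omega, rfl⟩
  by_contra! hcol
  obtain rfl : c₀ = c := by omega
  exact (L.col_le hr₀ hc (by omega) hrc).not_gt hlt

theorem KeyReachable.down (hK : L.KeyReachable K (r + 1) c) (hc : 2 ≤ c)
    (hrc : r + 1 + c ≤ h + 3) (hgt : K < L.val (r + 1) c) : L.KeyReachable K r c := by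
  obtain ⟨r₀, c₀, hr₀, hc₀, hsum, rfl⟩ := hK
  refine ⟨r₀, c₀, hr₀, hc₀, ?_, rfl⟩
  by_contra! hdiag
  exact (L.diag_le hr₀ hc (by omega) (by omega) hrc hgt.ne_top).not_gt hgt

end LDS

namespace AlphaSorted

variable {h α : ℕ} {L : LDS h} {K : ℕ∞}

theorem val_lt_val_of_diag_lt (hL : AlphaSorted h α L) {a b a' b' : ℕ} (ha : 2 ≤ a)
    (hb : 2 ≤ b) (ha' : 2 ≤ a') (hb' : 2 ≤ b') (hdiag : a + b < a' + b') (hα : a' + b' ≤ α + 3)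
    (hh : a' + b' ≤ h + 3) (htop : L.val a' b' ≠ ⊤) : L.val a b < L.val a' b' :=
  calc L.val a b
      ≤ L.val 2 (a + b - 2) :=
        L.diag_le le_rfl hb ha (by omega) (by omega)
          (L.proper_inner 2 _ le_rfl (by omega) (by omega))
    _ ≤ L.val 2 (a' + b' - 3) := L.row_le le_rfl (by omega) (by omega) (by omega)
    _ < L.val (a' + b' - 2) 2 := by
        convert hL (a' + b' - 1) (by omega) (by omega) using 2 <;> omega
    _ ≤ L.val a' b' := L.diag_le ha' le_rfl (by omega) (by omega) (by omega) htop

theorem searchPath_eq_replicate_true (hL : AlphaSorted h α L) {r c : ℕ} (hc : 2 ≤ c)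
    (hrc : r + 1 + c ≤ h + 3) (hK : L.KeyReachable K r (c + 1)) (hprev : L.val (r + 1) c < K)
    (hs : r + 1 + c ≤ α + 2 + (searchPath L.val K r (c + 1)).count false) :
    ∃ b, searchPath L.val K r (c + 1) = List.replicate b true := by
  induction r generalizing c with
  | zero => exact ⟨0, rfl⟩
  | succ r ih =>
    rcases searchPath_succ_cases L.val K r (c + 1) with hnil | ⟨hlt, hstep⟩ | ⟨hgt, hstep⟩
    · exact ⟨0, hnil⟩
    · rw [hstep] at hs ⊢
      obtain ⟨b, hb⟩ := ih (by omega) (by omega) (hK.right (by omega) (by omega) hlt) hlt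
        (by rw [List.count_cons_of_ne (by decide)] at hs; omega)
      exact ⟨b + 1, by rw [hb]; rfl⟩
    · rw [hstep] at hs ⊢
      have hK' := hK.down (by omega) (by omega) hgt
      have hprev' : L.val (r + 1) c < K :=
        (L.col_mono (r + 1) c (by have := hK'.two_le; omega) hc (by omega)).trans hprev
      obtain ⟨b, hb⟩ := ih hc (by omega) hK' hprev' (by rw [List.count_cons_self] at hs; omega)
      -- this was the last `D` move, so `K` lies on a diagonal before that of `(r + 2, c)`
      have hlast : r + 2 + c ≤ α + 3 := by
        simp only [hb, List.count_cons_self, List.count_replicate, Bool.true_beq,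
          Bool.false_eq_true, ↓reduceIte] at hs
        omega
      obtain ⟨r₀, c₀, hr₀, hc₀, hsum, rfl⟩ := hK'
      exact absurd hprev (hL.val_lt_val_of_diag_lt hr₀ (by omega) (by omega) hc (by omega) hlast
        (by omega) hprev.ne_top).not_gt

theorem searchPath_eq_replicate_append (hL : AlphaSorted h α L) {r c : ℕ} (hc : 2 ≤ c)
    (hrc : r + c ≤ h + 3) (hK : L.KeyReachable K r c)
    (hs : r + c ≤ α + 2 + (searchPath L.val K r c).count false) :
    ∃ a b, searchPath L.val K r c = List.replicate a false ++ List.replicate b true := by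
  induction r with
  | zero => exact ⟨0, 0, rfl⟩
  | succ r ih =>
    rcases searchPath_succ_cases L.val K r c with hnil | ⟨hlt, hstep⟩ | ⟨hgt, hstep⟩
    · exact ⟨0, 0, hnil⟩
    · rw [hstep] at hs ⊢
      obtain ⟨b, hb⟩ := hL.searchPath_eq_replicate_true hc hrc (hK.right hc hrc hlt) hlt
        (by rw [List.count_cons_of_ne (by decide)] at hs; omega)
      exact ⟨0, b + 1, by rw [hb]; rfl⟩
    · rw [hstep] at hs ⊢
      obtain ⟨a, b, hab⟩ := ih (by omega) (hK.down hc hrc hgt)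
        (by rw [List.count_cons_self] at hs; omega)
      exact ⟨a + 1, b, by rw [hab]; rfl⟩

end AlphaSorted

theorem alphaSorted_present_jump_factor_general (h α s : ℕ) (L : LDS h) (K : ℕ∞)
    (hsorted : AlphaSorted h α L)
    (hK : Present h L K)
    (hs : s + (path h L K).count false = h + 2) (hsα : s < α + 2) :
    (∃ a b, path h L K = List.replicate a false ++ List.replicate b true) ∧
      numRuns (path h L K) ≤ 2 := by
  obtain ⟨a, b, hab⟩ : ∃ a b, path h L K = List.replicate a false ++ List.replicate b true :=
    hsorted.searchPath_eq_replicate_append le_rfl le_rfl (LDS.keyReachable_of_present hK)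
      (by unfold path at hs; omega)
  exact ⟨⟨a, b, hab⟩, hab ▸ numRuns_replicate_append_replicate_le a b false true⟩

/-- If `L` is an `α`-sorted lattice (`3 ≤ α ≤ h`) and `K` is a present key whose
search path ends on a diagonal `s < α + 2` (the search starts on diagonal
`h + 2` and each `D` movement decreases the diagonal by one, so the final
diagonal `s` satisfies `s + #D-movements = h + 2`), then the search path of
`K` has the form `D^a d^b`, and hence `J(K) ≤ 2`. -/
theorem alphaSorted_present_jump_factor (h α s : ℕ) (L : LDS h) (K : ℕ∞)
    (hα3 : 3 ≤ α) (hαh : α ≤ h) (hsorted : AlphaSorted h α L)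
    (hK : Present h L K)
    (hs : s + (path h L K).count false = h + 2) (hsα : s < α + 2) :
    (∃ a b, path h L K = List.replicate a false ++ List.replicate b true) ∧
      numRuns (path h L K) ≤ 2 :=
  alphaSorted_present_jump_factor_general h α s L K hsorted hK hs hsα
end

section
/- If L is an h-sorted lattice of height h, then J(K) ≤ 2 for every present key K and J(K) ≤ 4 for every absent key K; consequently J(L) ≤ 4. -/
open scoped Classical

/-!
From the start cell `(h + 1, 2)` the search first descends column 2 while `K` is smaller than
the current key; as soon as it meets a key below `K`, say at row `ρ`, it runs down-right along
diagonal `ρ + 1`. In an `h`-sorted lattice every key of a diagonal lies below every key of the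
next one, so a present key lies on exactly that diagonal and is reached without turning again:
the path is `D^a d^b`. For any other key the diagonal run may meet a key above `K`; one more
down-step then leads to the previous diagonal, all of whose keys lie below `K`, so the path is
`D^a d^b D d^c`.
-/

theorem numRuns_cons_le (a : Bool) (w : List Bool) : numRuns (a :: w) ≤ numRuns w + 1 := by
  cases w with
  | nil => simp [numRuns]
  | cons b l =>
    simp only [numRuns, List.destutter_cons', List.destutter'_cons]
    split_ifs with hab
    · simp
    · obtain rfl : a = b := not_not.mp hab
      exact Nat.le_succ _

theorem numRuns_replicate_append_le (n : ℕ) (a : Bool) (w : List Bool) :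
    numRuns (List.replicate n a ++ w) ≤ numRuns w + 1 := by
  cases n with
  | zero => simp
  | succ n =>
    have hcollapse : numRuns (List.replicate (n + 1) a ++ w) = numRuns (a :: w) := by
      simp only [numRuns, List.replicate_succ, List.cons_append, List.destutter_cons']
      induction n with
      | zero => rfl
      | succ n ih =>
        rw [List.replicate_succ, List.cons_append, List.destutter'_cons, if_neg (by simp), ih]
    exact hcollapse ▸ numRuns_cons_le a w

section searchPath

variable {val : ℕ → ℕ → ℕ∞} {K : ℕ∞}

theorem searchPath_succ_of_lt_val {r c : ℕ} (hK : K < val (r + 1) c) :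
    searchPath val K (r + 1) c = false :: searchPath val K r c := by
  simp [searchPath, hK.ne', (pos_of_gt hK).ne', not_lt_of_gt hK]

theorem searchPath_succ_of_val_lt {r c : ℕ} (hK : val (r + 1) c < K)
    (hpos : val (r + 1) c ≠ 0) :
    searchPath val K (r + 1) c = true :: searchPath val K r (c + 1) := by
  simp [searchPath, hK.ne, hpos, hK]

theorem numRuns_searchPath_le_of_column {k r c : ℕ}
    (hS : ∀ ρ, 1 ≤ ρ → ρ ≤ r → val ρ c < K → numRuns (searchPath val K ρ c) ≤ k) :
    numRuns (searchPath val K r c) ≤ k + 1 := by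
  suffices ∃ a w, searchPath val K r c = List.replicate a false ++ w ∧ numRuns w ≤ k by
    obtain ⟨a, w, hw, hk⟩ := this
    rw [hw]
    exact (numRuns_replicate_append_le a false w).trans (by omega)
  induction r with
  | zero => exact ⟨0, [], rfl, by simp [numRuns]⟩
  | succ r ih =>
    by_cases hstop : val (r + 1) c = K ∨ val (r + 1) c = 0
    · exact ⟨0, [], by simp [searchPath, hstop], by simp [numRuns]⟩
    rcases lt_or_gt_of_ne (not_or.mp hstop).1 with hlt | hgt
    · exact ⟨0, _, rfl, hS (r + 1) le_add_self le_rfl hlt⟩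
    · obtain ⟨a, w, hw, hk⟩ := ih fun ρ hρ hρr => hS ρ hρ (by omega)
      exact ⟨a + 1, w, by rw [searchPath_succ_of_lt_val hgt, hw]; rfl, hk⟩

theorem numRuns_searchPath_le_of_diagonal {k r c : ℕ}
    (hS : ∀ i < r, (∀ j < i, val (r - j) (c + j) < K) → K < val (r - i) (c + i) →
      numRuns (searchPath val K (r - i) (c + i)) ≤ k) :
    numRuns (searchPath val K r c) ≤ k + 1 := by
  suffices ∃ b w, searchPath val K r c = List.replicate b true ++ w ∧ numRuns w ≤ k by
    obtain ⟨b, w, hw, hk⟩ := this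
    rw [hw]
    exact (numRuns_replicate_append_le b true w).trans (by omega)
  induction r generalizing c with
  | zero => exact ⟨0, [], rfl, by simp [numRuns]⟩
  | succ r ih =>
    by_cases hstop : val (r + 1) c = K ∨ val (r + 1) c = 0
    · exact ⟨0, [], by simp [searchPath, hstop], by simp [numRuns]⟩
    rcases lt_or_gt_of_ne (not_or.mp hstop).1 with hlt | hgt
    · have hshift : ∀ j, r + 1 - (j + 1) = r - j ∧ c + (j + 1) = c + 1 + j := fun j => by omega
      obtain ⟨b, w, hw, hk⟩ := ih fun i hi hguard hK => by
        have hguard' : ∀ j < i + 1, val (r + 1 - j) (c + j) < K := by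
          rintro (_ | j) hj
          · simpa using hlt
          · rw [(hshift j).1, (hshift j).2]
            exact hguard j (by omega)
        have hnext := hS (i + 1) (by omega) hguard' (by rwa [(hshift i).1, (hshift i).2])
        rwa [(hshift i).1, (hshift i).2] at hnext
      refine ⟨b + 1, w, ?_, hk⟩
      rw [searchPath_succ_of_val_lt hlt (not_or.mp hstop).2, hw]
      rfl
    · have hfirst := hS 0 (by omega) (by simp) (by simpa only [Nat.sub_zero, Nat.add_zero])
      simp only [Nat.sub_zero, Nat.add_zero] at hfirst
      exact ⟨0, _, rfl, hfirst⟩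

theorem numRuns_searchPath_le_one {r c : ℕ} (hle : ∀ i < r, val (r - i) (c + i) ≤ K) :
    numRuns (searchPath val K r c) ≤ 1 :=
  numRuns_searchPath_le_of_diagonal (k := 0) fun i hi _ hK => absurd (hle i hi) (not_le.mpr hK)

end searchPath

namespace LDS

variable {h : ℕ} (L : LDS h)

theorem val_lt_val_of_diag {r c r' c' : ℕ} (hc : 2 ≤ c) (hr' : 2 ≤ r') (hcc : c < c')
    (hsum : r' + c' = r + c) (hle : r + c ≤ h + 3) (htop : L.val r' c' ≠ ⊤) :
    L.val r c < L.val r' c' := by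
  induction c', hcc using Nat.le_induction generalizing r' with
  | base =>
    obtain rfl : r' = r - 1 := by omega
    exact L.diag_mono r c (by omega) hc hle htop
  | succ c' hcc ih =>
    have hstep := L.diag_mono (r' + 1) c' (by omega) (by omega) (by omega) (by simpa using htop)
    rw [Nat.add_sub_cancel] at hstep
    exact (ih (by omega) (by omega) hstep.ne_top).trans hstep

theorem val_le_val_of_diag {r c r' c' : ℕ} (hc : 2 ≤ c) (hr' : 2 ≤ r') (hcc : c ≤ c')
    (hsum : r' + c' = r + c) (hle : r + c ≤ h + 3) (htop : L.val r' c' ≠ ⊤) :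
    L.val r c ≤ L.val r' c' := by
  rcases hcc.eq_or_lt with rfl | hlt
  · obtain rfl : r' = r := by omega
    exact le_rfl
  · exact (L.val_lt_val_of_diag hc hr' hlt hsum hle htop).le

theorem val_le_val_of_row_le {r r' c : ℕ} (hr : 2 ≤ r) (hc : 2 ≤ c) (hrr : r ≤ r')
    (hle : r' + c ≤ h + 3) : L.val r c ≤ L.val r' c := by
  induction r', hrr using Nat.le_induction with
  | base => exact le_rfl
  | succ r' hrr ih => exact (ih (by omega)).trans (L.col_mono r' c (by omega) hc hle).le

end LDS

theorem AlphaSorted.val_lt_val_of_add_lt {h α : ℕ} {L : LDS h} (hs : AlphaSorted h α L)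
    {r c r' c' : ℕ} (hr : 2 ≤ r) (hc : 2 ≤ c) (hr' : 2 ≤ r') (hc' : 2 ≤ c')
    (hα : r + c ≤ α + 2) (hlt : r + c < r' + c') (hle : r' + c' ≤ h + 3) :
    L.val r c < L.val r' c' :=
  calc L.val r c ≤ L.val 2 (r + c - 2) :=
        L.val_le_val_of_diag hc le_rfl (by omega) (by omega) (by omega)
          (L.proper_inner 2 _ le_rfl (by omega) (by omega))
    _ < L.val (r + c - 1) 2 := hs (r + c) (by omega) hα
    _ ≤ L.val (r' + c' - 2) 2 := L.val_le_val_of_row_le (by omega) le_rfl (by omega) (by omega)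
    _ ≤ L.val r' c' := by
        by_cases htop : L.val r' c' = ⊤
        · exact htop ▸ le_top
        · exact L.val_le_val_of_diag le_rfl hr' hc' (by omega) (by omega) htop

theorem numRuns_path_le_four {h : ℕ} {L : LDS h} (hs : AlphaSorted h h L) (K : ℕ∞) :
    numRuns (path h L K) ≤ 4 := by
  refine numRuns_searchPath_le_of_column fun ρ _ hρ hρK => ?_
  refine numRuns_searchPath_le_of_diagonal fun i hi _ hK => ?_
  obtain ⟨m, hm⟩ : ∃ m, ρ - i = m + 1 := ⟨ρ - i - 1, by omega⟩
  rw [hm, searchPath_succ_of_lt_val (hm ▸ hK)]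
  refine (numRuns_cons_le false _).trans (Nat.add_le_add_right ?_ 1)
  refine numRuns_searchPath_le_one fun j hj => ?_
  by_cases hrow : m - j = 1
  · rw [hrow, L.row_one]
    exact zero_le
  · exact (hs.val_lt_val_of_add_lt (by omega) (by omega) (by omega) le_rfl (by omega) (by omega)
      (by omega)).le.trans hρK.le

theorem numRuns_path_le_two_of_present {h : ℕ} {L : LDS h} (hs : AlphaSorted h h L) {K : ℕ∞}
    (hK : Present h L K) : numRuns (path h L K) ≤ 2 := by
  obtain ⟨r₀, c₀, hr₀, hc₀, hsum₀, rfl⟩ := hK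
  refine numRuns_searchPath_le_of_column fun ρ _ hρ hρK => ?_
  refine numRuns_searchPath_le_of_diagonal fun i hi hguard hK => absurd hK ?_
  have hrow : 2 ≤ ρ - i := by
    by_contra hrow
    rw [show ρ - i = 1 by omega, L.row_one] at hK
    exact zero_le.not_gt hK
  rcases lt_trichotomy (ρ + 2) (r₀ + c₀) with hlt | heq | hgt
  · exact (hs.val_lt_val_of_add_lt hrow (by omega) hr₀ hc₀ (by omega) (by omega) hsum₀).asymm
  · have htop : L.val r₀ c₀ ≠ ⊤ := (hK.trans_le le_top).ne_top
    obtain ⟨hr, hc⟩ : ρ - (c₀ - 2) = r₀ ∧ 2 + (c₀ - 2) = c₀ := ⟨by omega, by omega⟩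
    rcases lt_trichotomy i (c₀ - 2) with hic | rfl | hic
    · exact (L.val_lt_val_of_diag (by omega) hr₀ (by omega) (by omega) (by omega) htop).asymm
    · rw [hr, hc]
      exact lt_irrefl _
    · exact absurd (hguard _ hic) (by rw [hr, hc]; exact lt_irrefl _)
  · exact absurd (hs.val_lt_val_of_add_lt hr₀ hc₀ (by omega) le_rfl (by omega) hgt (by omega))
      hρK.asymm

theorem hSorted_jump_factors_general (h : ℕ) (L : LDS h)
    (hsorted : AlphaSorted h h L) :
    (∀ K : ℕ∞, Present h L K → numRuns (path h L K) ≤ 2) ∧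
    (∀ K : ℕ∞, InSearchSpace K → ¬ Present h L K → numRuns (path h L K) ≤ 4) ∧
    (∀ K : ℕ∞, InSearchSpace K → numRuns (path h L K) ≤ 4) :=
  ⟨fun _ hK => numRuns_path_le_two_of_present hsorted hK,
    fun K _ _ => numRuns_path_le_four hsorted K,
    fun K _ => numRuns_path_le_four hsorted K⟩

/-- If `L` is an `h`-sorted lattice of height `h`, then `J(K) ≤ 2` for every
present key `K`, `J(K) ≤ 4` for every absent key `K` of the search space, and
consequently `J(L) ≤ 4`. -/
theorem hSorted_jump_factors (h : ℕ) (hh : 3 ≤ h) (L : LDS h)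
    (hsorted : AlphaSorted h h L) :
    (∀ K : ℕ∞, Present h L K → numRuns (path h L K) ≤ 2) ∧
    (∀ K : ℕ∞, InSearchSpace K → ¬ Present h L K → numRuns (path h L K) ≤ 4) ∧
    (∀ K : ℕ∞, InSearchSpace K → numRuns (path h L K) ≤ 4) :=
  hSorted_jump_factors_general h L hsorted
end
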